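/- Let x : Fin n → ℝ with x_1 ≥ x_2 ≥ ... ≥ x_n > 0, let X = ∑ x_i, E > 0, and 2 ≤ k ≤ n. Define H_k = ((∑_{i=1}^k (x_i + E/k)^2) + ∑_{i=k+1}^n x_i^2)/(X+E)^2. Then H_{k-1} > H_k. -/

import Mathlib

open Finset

lemma filter_lt_eq_map (n k : ℕ) (hkn : k ≤ n) :
    univ.filter (fun i : Fin n => (i : ℕ) < k) = Finset.map (Fin.castLEEmb hkn) univ := by
  ext i
  simp only [mem_filter, mem_univ, true_and, Finset.mem_map, Fin.castLEEmb_apply]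
  constructor
  · intro h; exact ⟨⟨i, h⟩, by simp⟩
  · rintro ⟨j, -, rfl⟩; exact j.isLt

lemma card_filter_lt (n k : ℕ) (hkn : k ≤ n) :
    (univ.filter (fun i : Fin n => (i : ℕ) < k)).card = k := by
  rw [filter_lt_eq_map n k hkn, Finset.card_map, card_univ, Fintype.card_fin]

lemma expand_sum {n : ℕ} (x : Fin n → ℝ) (s : Finset (Fin n)) (c : ℝ) :
    ∑ i ∈ s, (x i + c) ^ 2
      = ∑ i ∈ s, x i ^ 2 + 2 * c * ∑ i ∈ s, x i + s.card * c ^ 2 := by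
  have h : ∀ i ∈ s, (x i + c) ^ 2 = x i ^ 2 + 2 * c * x i + c ^ 2 := fun i _ => by ring
  rw [Finset.sum_congr rfl h, Finset.sum_add_distrib, Finset.sum_add_distrib,
    ← Finset.mul_sum, Finset.sum_const, nsmul_eq_mul]

/-- Lemma 2: the post-rule HHI is strictly decreasing in `k`: `H_{k-1} > H_k`. -/
theorem ktop_HHI_decreasing (n k : ℕ) (hk2 : 2 ≤ k) (hkn : k ≤ n) (x : Fin n → ℝ)
    (hpos : ∀ i, 0 < x i) (hmono : Antitone x) (E : ℝ) (hE : 0 < E) :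
    ((∑ i ∈ univ.filter (fun i : Fin n => (i : ℕ) < k - 1),
          (x i + E / ((k - 1 : ℕ) : ℝ)) ^ 2) +
        ∑ i ∈ univ.filter (fun i : Fin n => ¬ (i : ℕ) < k - 1), x i ^ 2) /
        ((∑ i, x i) + E) ^ 2 >
      ((∑ i ∈ univ.filter (fun i : Fin n => (i : ℕ) < k), (x i + E / (k : ℝ)) ^ 2) +
        ∑ i ∈ univ.filter (fun i : Fin n => ¬ (i : ℕ) < k), x i ^ 2) /
        ((∑ i, x i) + E) ^ 2 := by
  have hXpos : 0 < ∑ i, x i + E := by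
    have : 0 < ∑ i, x i := by
      have hn : 0 < n := lt_of_lt_of_le (lt_of_lt_of_le two_pos hk2) hkn
      exact Finset.sum_pos (fun i _ => hpos i) (univ_nonempty_iff.mpr ⟨⟨0, hn⟩⟩)
    linarith
  have hd : (0:ℝ) < ((∑ i, x i) + E) ^ 2 := by positivity
  rw [gt_iff_lt, div_lt_div_iff_of_pos_right hd]
  -- index j = k-1
  have hjlt : k - 1 < n := lt_of_lt_of_le (Nat.sub_lt (by omega) one_pos) hkn
  set j : Fin n := ⟨k - 1, hjlt⟩ with hj
  -- set decompositions
  have hset1 : univ.filter (fun i : Fin n => (i : ℕ) < k)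
      = insert j (univ.filter (fun i : Fin n => (i : ℕ) < k - 1)) := by
    ext i
    simp only [mem_filter, mem_univ, true_and, mem_insert, Fin.ext_iff, hj]
    omega
  have hset2 : univ.filter (fun i : Fin n => ¬ (i : ℕ) < k - 1)
      = insert j (univ.filter (fun i : Fin n => ¬ (i : ℕ) < k)) := by
    ext i
    simp only [mem_filter, mem_univ, true_and, mem_insert, Fin.ext_iff, hj]
    omega
  have hjnot1 : j ∉ univ.filter (fun i : Fin n => (i : ℕ) < k - 1) := by
    simp [hj]
  have hjnot2 : j ∉ univ.filter (fun i : Fin n => ¬ (i : ℕ) < k) := by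
    simp [hj]; omega
  set S : ℝ := ∑ i ∈ univ.filter (fun i : Fin n => (i : ℕ) < k - 1), x i with hS
  -- S ≥ (k-1) * x j
  have hSge : ((k - 1 : ℕ) : ℝ) * x j ≤ S := by
    rw [hS]
    calc ((k - 1 : ℕ) : ℝ) * x j
        = ∑ _i ∈ univ.filter (fun i : Fin n => (i : ℕ) < k - 1), x j := by
          rw [Finset.sum_const, card_filter_lt n (k-1) (by omega), nsmul_eq_mul]
      _ ≤ ∑ i ∈ univ.filter (fun i : Fin n => (i : ℕ) < k - 1), x i := by
          apply Finset.sum_le_sum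
          intro i hi
          simp only [mem_filter, mem_univ, true_and] at hi
          exact hmono (by simp [Fin.le_iff_val_le_val, hj]; omega)
  -- expand both sides
  rw [expand_sum x _ (E / ((k-1 : ℕ) : ℝ)), expand_sum x _ (E / (k : ℝ)),
    card_filter_lt n (k-1) (by omega), card_filter_lt n k hkn,
    hset1, hset2, Finset.sum_insert hjnot1, Finset.sum_insert hjnot1,
    Finset.sum_insert hjnot2]
  set Q1 : ℝ := ∑ i ∈ univ.filter (fun i : Fin n => (i : ℕ) < k - 1), x i ^ 2
  set Q2 : ℝ := ∑ i ∈ univ.filter (fun i : Fin n => ¬ (i : ℕ) < k), x i ^ 2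
  set m : ℝ := ((k - 1 : ℕ) : ℝ) with hm
  have hm1 : (1:ℝ) ≤ m := by rw [hm]; exact_mod_cast Nat.one_le_iff_ne_zero.mpr (by omega)
  have hkR : ((k : ℕ) : ℝ) = m + 1 := by
    have h : k = (k - 1) + 1 := by omega
    rw [hm, h]; push_cast; ring
  rw [hkR]
  have hmpos : 0 < m := by linarith
  have hm1pos : 0 < m + 1 := by linarith
  have hxj : 0 < x j := hpos j
  have key : 2 * (E / (m+1)) * (x j + S) + (m+1) * (E / (m+1)) ^ 2
      < 2 * (E / m) * S + m * (E / m) ^ 2 := by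
    rw [div_pow, div_pow]
    have h1 : (m+1) * (E^2 / (m+1)^2) = E^2 / (m+1) := by field_simp
    have h2 : m * (E^2 / m^2) = E^2 / m := by field_simp
    rw [h1, h2,
      show 2 * (E / (m+1)) * (x j + S) = (2 * E * (x j + S)) / (m+1) by ring,
      show 2 * (E / m) * S = (2 * E * S) / m by ring,
      div_add_div _ _ (ne_of_gt hm1pos) (ne_of_gt hm1pos),
      div_add_div _ _ (ne_of_gt hmpos) (ne_of_gt hmpos),
      div_lt_div_iff₀ (by positivity) (by positivity)]
    nlinarith [mul_pos hE hxj, sq_nonneg E, mul_le_mul_of_nonneg_left hSge (le_of_lt (mul_pos two_pos hE))]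
  nlinarith [key]
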